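/- Let f : A → B be a proper continuous map of locally compact Hausdorff spaces, and let Iᵏ = [−1,1]ᵏ. Then Z(f) × Iᵏ is homeomorphic to the mapping cylinder Z(g) of the map g : A × Iᵏ ∪ Z(f) × ∂Iᵏ → B defined by g = (f ∘ pr_A) on A × Iᵏ and g = ρ ∘ pr_{Z(f)} on Z(f) × ∂Iᵏ, where ρ : Z(f) → B is the mapping cylinder retraction, and this homeomorphism can be chosen to be the identity on B = B × {0}. -/

import Mathlib

open unitInterval

variable {A B : Type*} [TopologicalSpace A] [TopologicalSpace B]

/-- The gluing relation for the mapping cylinder of `f`: `(a,1) ~ f a`. -/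
def cylRel (f : C(A, B)) : (A × I ⊕ B) → (A × I ⊕ B) → Prop := fun x y =>
  x = y ∨ (∃ a : A, x = Sum.inl (a, 1) ∧ y = Sum.inr (f a)) ∨
    (∃ a : A, y = Sum.inl (a, 1) ∧ x = Sum.inr (f a))

/-- The mapping cylinder `Z(f)`. -/
def Cyl (f : C(A, B)) : Type _ := Quot (cylRel f)

instance (f : C(A, B)) : TopologicalSpace (Cyl f) :=
  inferInstanceAs (TopologicalSpace (Quot (cylRel f)))

/-- The inclusion `B ↪ Z(f)`. -/
def cylIncl (f : C(A, B)) : B → Cyl f := fun b => Quot.mk _ (Sum.inr b)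

/-- The canonical embedding `A ↪ Z(f)`, `a ↦ (a, 0)`. -/
def cylEmb (f : C(A, B)) : A → Cyl f := fun a => Quot.mk _ (Sum.inl (a, 0))

/-- The mapping cylinder retraction `ρ : Z(f) → B`, as a continuous map. -/
def cylRetr (f : C(A, B)) : C(Cyl f, B) :=
  ⟨Quot.lift (Sum.elim (fun p => f p.1) id) (by
      rintro x y (rfl | ⟨a, rfl, rfl⟩ | ⟨a, rfl, rfl⟩) <;> rfl),
    continuous_quot_lift _ ((f.continuous.comp continuous_fst).sumElim continuous_id)⟩

/-- The cube `Iᵏ = [−1,1]ᵏ` as a subspace of `ℝᵏ`. -/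
abbrev Icube (k : ℕ) : Type _ := {x : Fin k → ℝ // ∀ i, |x i| ≤ 1}

/-- The subspace `A × Iᵏ ∪ Z(f) × ∂Iᵏ` of `Z(f) × Iᵏ`. -/
def cylBdry (f : C(A, B)) (k : ℕ) : Set (Cyl f × Icube k) :=
  {p | (∃ a : A, p.1 = cylEmb f a) ∨ ∃ i, |(p.2 : Fin k → ℝ) i| = 1}

/-- The map `g : A × Iᵏ ∪ Z(f) × ∂Iᵏ → B`, given by `ρ` composed with the projection. -/
def gMap (f : C(A, B)) (k : ℕ) : C(↥(cylBdry f k), B) :=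
  ⟨fun p => cylRetr f p.1.1,
    (cylRetr f).continuous.comp (continuous_fst.comp continuous_subtype_val)⟩

/-!
Write `depth z = 1 - t` for the distance of `z = (a, t) ∈ Z(f)` from `B`, and give
`(z, x) ∈ Z(f) × Iᵏ` the radius `r = max (depth z) ‖x‖∞`. Scaling depth and cube coordinate
by `c` scales the radius by `c`, and the points of radius one are exactly
`A × Iᵏ ∪ Z(f) × ∂Iᵏ`. So `Z(f) × Iᵏ` is a fibrewise cone over `B` on that boundary:
`(z, x) ↦ (r⁻¹ • (z, x), 1 - r)` identifies it with `Z(g)`, the points of radius zero being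
`B × {0}`. Continuity at those points is the tube lemma: over a point of `A` or of `B` the
boundary points that occur form a compact family.
-/

open Filter Topology unitInterval

theorem continuous_sum_prod_dom {X Y Z W : Type*} [TopologicalSpace X] [TopologicalSpace Y]
    [TopologicalSpace Z] [TopologicalSpace W] {g : (X ⊕ Y) × Z → W}
    (hl : Continuous fun p : X × Z => g (.inl p.1, p.2))
    (hr : Continuous fun p : Y × Z => g (.inr p.1, p.2)) : Continuous g := by
  have h : Continuous fun q => g (Homeomorph.sumProdDistrib.symm q) :=
    continuous_sum_dom.2 ⟨hl, hr⟩
  have hg : g = (fun q => g (Homeomorph.sumProdDistrib.symm q)) ∘ Homeomorph.sumProdDistrib := by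
    funext p
    simp
  rw [hg]
  exact h.comp Homeomorph.sumProdDistrib.continuous

namespace Icube

variable {k : ℕ}

theorem norm_le_one (x : Icube k) : ‖(x : Fin k → ℝ)‖ ≤ 1 :=
  (pi_norm_le_iff_of_nonneg zero_le_one).2 fun i => x.2 i

theorem abs_le_of_norm_le {x : Fin k → ℝ} (hx : ‖x‖ ≤ 1) (i : Fin k) : |x i| ≤ 1 :=
  (norm_le_pi_norm x i).trans hx

theorem norm_eq_one_iff (x : Icube k) :
    ‖(x : Fin k → ℝ)‖ = 1 ↔ ∃ i, |(x : Fin k → ℝ) i| = 1 := by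
  constructor
  · intro h
    by_contra! hne
    have : ‖(x : Fin k → ℝ)‖ < 1 :=
      (pi_norm_lt_iff zero_lt_one).2 fun i => lt_of_le_of_ne (x.2 i) (hne i)
    exact this.ne h
  · rintro ⟨i, hi⟩
    have := norm_le_pi_norm (x : Fin k → ℝ) i
    rw [Real.norm_eq_abs, hi] at this
    exact le_antisymm (norm_le_one x) this

instance : CompactSpace (Icube k) := by
  have : {x : Fin k → ℝ | ∀ i, |x i| ≤ 1} = Set.univ.pi fun _ => Set.Icc (-1) 1 := by
    ext x
    simp only [Set.mem_ofPred_eq, Set.mem_univ_pi, Set.mem_Icc, abs_le]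
  have hK : IsCompact {x : Fin k → ℝ | ∀ i, |x i| ≤ 1} := by
    rw [this]
    exact isCompact_univ_pi fun _ => isCompact_Icc
  exact isCompact_iff_compactSpace.1 hK

end Icube

namespace Cyl

variable (f : C(A, B))

def mk (a : A) (t : I) : Cyl f := Quot.mk _ (.inl (a, t))

theorem mk_one (a : A) : mk f a 1 = cylIncl f (f a) :=
  Quot.sound (Or.inr (Or.inl ⟨a, rfl, rfl⟩))

@[fun_prop]
theorem continuous_mk : Continuous fun p : A × I => mk f p.1 p.2 :=
  continuous_quot_mk.comp continuous_inl

@[fun_prop]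
theorem continuous_cylIncl : Continuous (cylIncl f) :=
  continuous_quot_mk.comp continuous_inr

variable {f}

@[elab_as_elim]
theorem induction_on {motive : Cyl f → Prop} (z : Cyl f) (mk : ∀ a t, motive (mk f a t))
    (incl : ∀ b, motive (cylIncl f b)) : motive z :=
  Quot.ind (Sum.rec (fun p => mk p.1 p.2) incl) z

theorem cylEmb_eq_mk (a : A) : cylEmb f a = mk f a 0 := rfl

variable (f) in
def depth : C(Cyl f, ℝ) :=
  ⟨Quot.lift (Sum.elim (fun p => 1 - (p.2 : ℝ)) 0) (by
      rintro x y (rfl | ⟨a, rfl, rfl⟩ | ⟨a, rfl, rfl⟩) <;> simp),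
    continuous_quot_lift _
      ((continuous_const.sub (continuous_subtype_val.comp continuous_snd)).sumElim
        continuous_const)⟩

@[simp] theorem depth_mk (a : A) (t : I) : depth f (mk f a t) = 1 - t := rfl

@[simp] theorem depth_cylIncl (b : B) : depth f (cylIncl f b) = 0 := rfl

theorem depth_nonneg (z : Cyl f) : 0 ≤ depth f z :=
  z.induction_on (fun _ t => by simp [t.2.2]) fun _ => by simp

theorem depth_le_one (z : Cyl f) : depth f z ≤ 1 :=
  z.induction_on (fun _ t => by simp [t.2.1]) fun _ => by simp

theorem depth_eq_one_iff (z : Cyl f) : depth f z = 1 ↔ ∃ a, z = cylEmb f a := by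
  refine ⟨fun h => ?_, by rintro ⟨a, rfl⟩; simp [cylEmb_eq_mk]⟩
  induction z using induction_on with
  | mk a t => exact ⟨a, by rw [show t = 0 from Subtype.ext (by simpa using h)]; rfl⟩
  | incl b => simp at h

theorem eq_cylIncl_of_depth_eq_zero {z : Cyl f} (h : depth f z = 0) :
    z = cylIncl f (cylRetr f z) := by
  induction z using induction_on with
  | mk a t =>
    rw [show t = 1 from Subtype.ext (sub_eq_zero.1 h).symm]
    exact mk_one f a
  | incl b => rfl

variable (f) in
/-- Multiplies the depth of every point by `c`, truncating at the bottom `A × {0}`. -/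
noncomputable def scale (c : ℝ) : Cyl f → Cyl f :=
  Quot.map (Sum.map (Prod.map id fun t => Set.projIcc 0 1 zero_le_one (1 - c * (1 - t))) id) (by
    rintro x y (rfl | ⟨a, rfl, rfl⟩ | ⟨a, rfl, rfl⟩)
    · exact Or.inl rfl
    · exact Or.inr (Or.inl ⟨a, by simp, rfl⟩)
    · exact Or.inr (Or.inr ⟨a, by simp, rfl⟩))

@[simp] theorem scale_mk (c : ℝ) (a : A) (t : I) :
    scale f c (mk f a t) = mk f a (Set.projIcc 0 1 zero_le_one (1 - c * (1 - t))) := rfl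

@[simp] theorem scale_cylIncl (c : ℝ) (b : B) : scale f c (cylIncl f b) = cylIncl f b := rfl

@[simp] theorem cylRetr_scale (c : ℝ) (z : Cyl f) : cylRetr f (scale f c z) = cylRetr f z :=
  z.induction_on (fun _ _ => rfl) fun _ => rfl

theorem depth_scale {c : ℝ} (hc : 0 ≤ c) (z : Cyl f) :
    depth f (scale f c z) = min 1 (c * depth f z) := by
  induction z using induction_on with
  | mk a t =>
    have : 0 ≤ c * (1 - t) := mul_nonneg hc (sub_nonneg.2 t.2.2)
    simp only [scale_mk, depth_mk, Set.coe_projIcc]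
    rw [max_def, min_def, min_def]
    split_ifs <;> linarith
  | incl b => simp

theorem scale_scale {c c' : ℝ} (hc' : 0 ≤ c') {z : Cyl f} (h : c' * depth f z ≤ 1) :
    scale f c (scale f c' z) = scale f (c * c') z := by
  induction z using induction_on with
  | mk a t =>
    have ht : 0 ≤ c' * (1 - t) := mul_nonneg hc' (sub_nonneg.2 t.2.2)
    rw [depth_mk] at h
    have hmem : 1 - c' * (1 - t) ∈ Set.Icc (0 : ℝ) 1 := ⟨by linarith, by linarith⟩
    simp only [scale_mk, Set.projIcc_of_mem _ hmem]
    congr 3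
    ring
  | incl b => rfl

theorem scale_one (z : Cyl f) : scale f 1 z = z :=
  z.induction_on (fun a t => by simp) fun _ => rfl

variable (f) in
theorem continuous_scale : Continuous fun p : ℝ × Cyl f => scale f p.1 p.2 := by
  refine isQuotientMap_quot_mk.continuous_lift_prod_right ?_
  refine (continuous_sum_prod_dom
    (g := fun p : (A × I ⊕ B) × ℝ => scale f p.2 (Quot.mk _ p.1)) ?_ ?_).comp continuous_swap
  · change Continuous fun p : (A × I) × ℝ =>
      mk f p.1.1 (Set.projIcc 0 1 zero_le_one (1 - p.2 * (1 - p.1.2)))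
    fun_prop
  · change Continuous fun p : B × ℝ => cylIncl f p.1
    fun_prop

theorem scale_zero (z : Cyl f) : scale f 0 z = cylIncl f (cylRetr f z) := by
  rw [eq_cylIncl_of_depth_eq_zero (z := scale f 0 z) (by simp [depth_scale le_rfl]),
    cylRetr_scale]

theorem eventually_forall_mk_mem {X Y K : Type*} [TopologicalSpace X] [TopologicalSpace Y]
    [TopologicalSpace K] [CompactSpace K] (g : C(X, B)) {φ : Y × K → X} (hφ : Continuous φ)
    {β : Y → B} (hgφ : ∀ y κ, g (φ (y, κ)) = β y) (y₀ : Y) {O : Set (Cyl g)}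
    (hO : O ∈ 𝓝 (cylIncl g (β y₀))) :
    ∀ᶠ p : Y × I in 𝓝 (y₀, 1), ∀ κ, mk g (φ (p.1, κ)) p.2 ∈ O := by
  have hcont : Continuous fun q : (Y × I) × K => mk g (φ (q.1.1, q.2)) q.1.2 := by fun_prop
  have hO' : ∀ κ, O ∈ 𝓝 (mk g (φ (y₀, κ)) 1) := fun κ => by rwa [mk_one, hgφ]
  simpa using isCompact_univ.eventually_forall_of_forall_eventually (x₀ := ((y₀, 1) : Y × I))
    (P := fun p κ => mk g (φ (p.1, κ)) p.2 ∈ O) fun κ _ =>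
    hcont.continuousAt.preimage_mem_nhds (hO' κ)

variable {k : ℕ}

variable (f) in
def radius (p : Cyl f × Icube k) : ℝ := max (depth f p.1) ‖(p.2 : Fin k → ℝ)‖

theorem radius_nonneg (p : Cyl f × Icube k) : 0 ≤ radius f p :=
  (depth_nonneg p.1).trans (le_max_left _ _)

theorem radius_le_one (p : Cyl f × Icube k) : radius f p ≤ 1 :=
  max_le (depth_le_one p.1) (Icube.norm_le_one p.2)

variable (f k) in
@[fun_prop]
theorem continuous_radius : Continuous (radius f (k := k)) := by
  unfold radius
  fun_prop

theorem mem_cylBdry_iff (p : Cyl f × Icube k) : p ∈ cylBdry f k ↔ radius f p = 1 := by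
  change ((∃ a, p.1 = cylEmb f a) ∨ _) ↔ _
  rw [← depth_eq_one_iff, ← Icube.norm_eq_one_iff, radius]
  constructor
  · rintro (h | h)
    · rw [h]; exact max_eq_left (Icube.norm_le_one p.2)
    · rw [h]; exact max_eq_right (depth_le_one p.1)
  · intro h
    rcases max_choice (depth f p.1) ‖(p.2 : Fin k → ℝ)‖ with h' | h' <;> rw [h'] at h
    exacts [Or.inl h, Or.inr h]

theorem radius_eq_mul {c : ℝ} (hc : 0 ≤ c) {p q : Cyl f × Icube k} (h : c * radius f p ≤ 1)
    (h₁ : q.1 = scale f c p.1) (h₂ : (q.2 : Fin k → ℝ) = c • (p.2 : Fin k → ℝ)) :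
    radius f q = c * radius f p := by
  have hd : c * depth f p.1 ≤ 1 := (mul_le_mul_of_nonneg_left (le_max_left _ _) hc).trans h
  rw [radius, h₁, h₂, depth_scale hc, min_eq_right hd, norm_smul, Real.norm_of_nonneg hc,
    ← mul_max_of_nonneg _ _ hc, radius]

variable (f k) in
noncomputable def normalize (p : Cyl f × Icube k) (h : 0 < radius f p) : ↥(cylBdry f k) :=
  let q : Cyl f × Icube k := (scale f (radius f p)⁻¹ p.1, ⟨(radius f p)⁻¹ • p.2, by
    refine Icube.abs_le_of_norm_le ?_
    rw [norm_smul, Real.norm_of_nonneg (inv_nonneg.2 h.le), inv_mul_le_one₀ h]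
    exact le_max_right _ _⟩)
  ⟨q, (mem_cylBdry_iff q).2 <| by
    rw [radius_eq_mul (inv_nonneg.2 h.le) (inv_mul_cancel₀ h.ne').le rfl rfl,
      inv_mul_cancel₀ h.ne']⟩

variable (f) in
def coradius (p : Cyl f × Icube k) : I :=
  ⟨1 - radius f p, sub_nonneg.2 (radius_le_one p), sub_le_self _ (radius_nonneg p)⟩

@[simp] theorem coe_coradius (p : Cyl f × Icube k) : (coradius f p : ℝ) = 1 - radius f p := rfl

variable (f k) in
@[fun_prop]
theorem continuous_coradius : Continuous (coradius f (k := k)) :=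
  (continuous_const.sub (continuous_radius f k)).subtype_mk _

variable (f k) in
noncomputable def ofProd (p : Cyl f × Icube k) : Cyl (gMap f k) :=
  if h : 0 < radius f p then
    mk _ (normalize f k p h) (coradius f p)
  else cylIncl _ (cylRetr f p.1)

theorem ofProd_of_radius_eq_zero {p : Cyl f × Icube k} (h : radius f p = 0) :
    ofProd f k p = cylIncl _ (cylRetr f p.1) :=
  dif_neg h.not_gt

variable (f k) in
noncomputable def toProd : Cyl (gMap f k) → Cyl f × Icube k :=
  Quot.lift (Sum.elim
    (fun q => (scale f (σ q.2) q.1.1.1, ⟨(σ q.2 : ℝ) • q.1.1.2, fun i => by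
      rw [Pi.smul_apply, smul_eq_mul, abs_mul, abs_of_nonneg (σ q.2).2.1]
      exact mul_le_one₀ (σ q.2).2.2 (abs_nonneg _) (q.1.1.2.2 i)⟩))
    (fun b => (cylIncl f b, ⟨0, by simp⟩))) (by
      rintro x y (rfl | ⟨P, rfl, rfl⟩ | ⟨P, rfl, rfl⟩) <;>
        simp only [Sum.elim_inl, Sum.elim_inr, symm_one, Set.Icc.coe_zero, scale_zero,
          zero_smul] <;>
        rfl)

@[simp] theorem normalize_fst (p : Cyl f × Icube k) (h : 0 < radius f p) :
    (normalize f k p h).1.1 = scale f (radius f p)⁻¹ p.1 := rfl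

@[simp] theorem coe_normalize_snd (p : Cyl f × Icube k) (h : 0 < radius f p) :
    ((normalize f k p h).1.2 : Fin k → ℝ) = (radius f p)⁻¹ • (p.2 : Fin k → ℝ) := rfl

@[simp] theorem toProd_mk_fst (P : ↥(cylBdry f k)) (s : I) :
    (toProd f k (mk _ P s)).1 = scale f (σ s) P.1.1 := rfl

@[simp] theorem coe_toProd_mk_snd (P : ↥(cylBdry f k)) (s : I) :
    ((toProd f k (mk _ P s)).2 : Fin k → ℝ) = (σ s : ℝ) • (P.1.2 : Fin k → ℝ) := rfl

@[simp] theorem toProd_cylIncl (b : B) :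
    toProd f k (cylIncl _ b) = (cylIncl f b, ⟨0, by simp⟩) := rfl

theorem radius_toProd_mk (P : ↥(cylBdry f k)) (s : I) :
    radius f (toProd f k (mk _ P s)) = σ s := by
  have hP : radius f P.1 = 1 := (mem_cylBdry_iff _).1 P.2
  rw [radius_eq_mul (σ s).2.1 (by rw [hP, mul_one]; exact (σ s).2.2) rfl rfl, hP, mul_one]

theorem ofProd_toProd (z : Cyl (gMap f k)) : ofProd f k (toProd f k z) = z := by
  induction z using induction_on with
  | mk P s =>
    have hr := radius_toProd_mk P s
    rcases (σ s).2.1.lt_or_eq with hs | hs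
    · have hd : (σ s : ℝ) * depth f P.1.1 ≤ 1 :=
        mul_le_one₀ (σ s).2.2 (depth_nonneg _) (depth_le_one _)
      rw [ofProd, dif_pos (hr ▸ hs)]
      congr 1
      · refine Subtype.ext (Prod.ext ?_ (Subtype.ext ?_))
        · rw [normalize_fst, toProd_mk_fst, hr, scale_scale (σ s).2.1 hd, inv_mul_cancel₀ hs.ne',
            scale_one]
        · rw [coe_normalize_snd, coe_toProd_mk_snd, hr, inv_smul_smul₀ hs.ne']
      · exact Subtype.ext (by simp [hr])
    · rw [ofProd_of_radius_eq_zero (hr.trans hs.symm), toProd_mk_fst, cylRetr_scale,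
        symm_eq_zero.1 (Set.Icc.coe_eq_zero.1 hs.symm), mk_one]
      rfl
  | incl b => exact ofProd_of_radius_eq_zero (by simp [radius])

theorem toProd_ofProd (p : Cyl f × Icube k) : toProd f k (ofProd f k p) = p := by
  by_cases h : 0 < radius f p
  · have hσ : (σ (coradius f p) : ℝ) = radius f p := by simp
    have hd : (radius f p)⁻¹ * depth f p.1 ≤ 1 :=
      (inv_mul_le_one₀ h).2 (le_max_left _ _)
    rw [ofProd, dif_pos h]
    refine Prod.ext ?_ (Subtype.ext ?_)
    · rw [toProd_mk_fst, hσ, normalize_fst, scale_scale (inv_nonneg.2 h.le) hd,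
        mul_inv_cancel₀ h.ne', scale_one]
    · rw [coe_toProd_mk_snd, hσ, coe_normalize_snd, smul_inv_smul₀ h.ne']
  · have h0 : radius f p = 0 := le_antisymm (not_lt.1 h) (radius_nonneg p)
    rw [ofProd_of_radius_eq_zero h0, toProd_cylIncl]
    refine Prod.ext (eq_cylIncl_of_depth_eq_zero ?_).symm (Subtype.ext ?_)
    · exact le_antisymm (h0 ▸ le_max_left _ _) (depth_nonneg _)
    · exact (norm_le_zero_iff.1 (h0 ▸ le_max_right _ _)).symm

variable (f k) in
theorem continuous_toProd : Continuous (toProd f k) := by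
  refine continuous_quot_lift _
    (Continuous.sumElim ?_ ((continuous_cylIncl f).prodMk continuous_const))
  have hσ : Continuous fun q : ↥(cylBdry f k) × I => (σ q.2 : ℝ) := by fun_prop
  exact ((continuous_scale f).comp (hσ.prodMk (by fun_prop))).prodMk
    (Continuous.subtype_mk (hσ.smul (by fun_prop)) _)

theorem continuousOn_ofProd : ContinuousOn (ofProd f k) {p | 0 < radius f p} := by
  rw [continuousOn_iff_continuous_domRestrict]
  have hr : Continuous fun p : {p : Cyl f × Icube k // 0 < radius f p} => (radius f p.1)⁻¹ :=
    ((continuous_radius f k).comp continuous_subtype_val).inv₀ fun p => p.2.ne'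
  have hnormalize : Continuous fun p : {p : Cyl f × Icube k // 0 < radius f p} =>
      normalize f k p.1 p.2 := by
    refine Continuous.subtype_mk (((continuous_scale f).comp (hr.prodMk ?_)).prodMk
      (Continuous.subtype_mk (hr.smul ?_) _)) _ <;> fun_prop
  have : Set.domRestrict {p | 0 < radius f p} (ofProd f k) =
      fun p => mk _ (normalize f k p.1 p.2) (coradius f p.1) := funext fun p => dif_pos p.2
  rw [this]
  fun_prop

/-- `hnormalize` keeps the boundary points used by `ofProd ∘ q` in the compact families
`φ (y, K)`, to which the tube lemma `eventually_forall_mk_mem` applies. -/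
theorem continuous_ofProd_comp {X Y K : Type*} [TopologicalSpace X] [TopologicalSpace Y]
    [TopologicalSpace K] [CompactSpace K] {q : X → Cyl f × Icube k} (hq : Continuous q)
    {π : X → Y} (hπ : Continuous π) {β : Y → B} (hβ : Continuous β)
    (hqβ : ∀ x, cylRetr f (q x).1 = β (π x)) {φ : Y × K → ↥(cylBdry f k)} (hφ : Continuous φ)
    (hφβ : ∀ y κ, gMap f k (φ (y, κ)) = β y)
    (hnormalize : ∀ x h, ∃ κ, normalize f k (q x) h = φ (π x, κ)) :
    Continuous (ofProd f k ∘ q) := by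
  refine continuous_iff_continuousAt.2 fun x₀ => ?_
  rcases (radius_nonneg (q x₀)).lt_or_eq with h | h
  · exact (continuousOn_ofProd.continuousAt
      ((isOpen_lt continuous_const (continuous_radius f k)).mem_nhds h)).comp hq.continuousAt
  intro O hO
  rw [Function.comp_apply, ofProd_of_radius_eq_zero h.symm, hqβ] at hO
  rw [Filter.mem_map]
  have hcoradius : coradius f (q x₀) = 1 := Subtype.ext (by simp [← h])
  have hs : Tendsto (fun x => (π x, coradius f (q x))) (𝓝 x₀) (𝓝 (π x₀, 1)) := by
    rw [← hcoradius]
    exact (hπ.prodMk ((continuous_coradius f k).comp hq)).tendsto x₀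
  filter_upwards [hs.eventually (eventually_forall_mk_mem (gMap f k) hφ hφβ (π x₀) hO),
    ((continuous_cylIncl _).comp (hβ.comp hπ)).continuousAt.preimage_mem_nhds hO] with x hx hx'
  change ofProd f k (q x) ∈ O
  by_cases hr : 0 < radius f (q x)
  · obtain ⟨κ, hκ⟩ := hnormalize x hr
    rw [ofProd, dif_pos hr, hκ]
    exact hx κ
  · rw [ofProd, dif_neg hr, hqβ]
    exact hx'

variable (f k) in
theorem continuous_ofProd : Continuous (ofProd f k) := by
  refine isQuotientMap_quot_mk.continuous_lift_prod_left (continuous_sum_prod_dom ?_ ?_)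
  · have : CompactSpace {r : I × Icube k // max (1 - (r.1 : ℝ)) ‖(r.2 : Fin k → ℝ)‖ = 1} :=
      isCompact_iff_compactSpace.1 (isClosed_eq (by fun_prop) continuous_const).isCompact
    refine continuous_ofProd_comp (q := fun x : (A × I) × Icube k => (mk f x.1.1 x.1.2, x.2))
      (by fun_prop) (π := fun x => x.1.1) (by fun_prop) f.continuous (fun _ => rfl)
      (φ := fun p : A × {r : I × Icube k // max (1 - (r.1 : ℝ)) ‖(r.2 : Fin k → ℝ)‖ = 1} =>
        ⟨(mk f p.1 p.2.1.1, p.2.1.2), (mem_cylBdry_iff _).2 p.2.2⟩)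
      (by fun_prop) (fun _ _ => rfl) fun x h => ?_
    exact ⟨⟨(_, (normalize f k _ h).1.2), (mem_cylBdry_iff _).1 (normalize f k _ h).2⟩, rfl⟩
  · have : CompactSpace {y : Icube k // ‖(y : Fin k → ℝ)‖ = 1} :=
      isCompact_iff_compactSpace.1 (isClosed_eq (by fun_prop) continuous_const).isCompact
    refine continuous_ofProd_comp (q := fun x : B × Icube k => (cylIncl f x.1, x.2))
      (by fun_prop) continuous_fst continuous_id (fun _ => rfl)
      (φ := fun p : B × {y : Icube k // ‖(y : Fin k → ℝ)‖ = 1} =>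
        ⟨(cylIncl f p.1, p.2.1), (mem_cylBdry_iff _).2 <| by simpa [radius] using p.2.2⟩)
      (by fun_prop) (fun _ _ => rfl) fun x h => ?_
    refine ⟨⟨(normalize f k _ h).1.2, ?_⟩, rfl⟩
    simpa [radius] using (mem_cylBdry_iff _).1 (normalize f k _ h).2

variable (f k) in
noncomputable def prodHomeomorph : Cyl f × Icube k ≃ₜ Cyl (gMap f k) where
  toFun := ofProd f k
  invFun := toProd f k
  left_inv := toProd_ofProd
  right_inv := ofProd_toProd
  continuous_toFun := continuous_ofProd f k
  continuous_invFun := continuous_toProd f k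

end Cyl

/-- For a proper continuous map `f : A → B` of locally compact Hausdorff
spaces, `Z(f) × Iᵏ` is homeomorphic to the mapping cylinder `Z(g)` of
`g : A × Iᵏ ∪ Z(f) × ∂Iᵏ → B`, by a homeomorphism which is the identity on `B = B × {0}`. -/
theorem mappingCylinder_times_cube {A B : Type*} [TopologicalSpace A] [TopologicalSpace B]
    (f : C(A, B)) (k : ℕ) :
    ∃ e : (Cyl f × Icube k) ≃ₜ Cyl (gMap f k),
      ∀ b : B, e (cylIncl f b, ⟨fun _ => 0, by intro i; simp⟩) = cylIncl (gMap f k) b :=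
  ⟨Cyl.prodHomeomorph f k, fun _ =>
    Cyl.ofProd_of_radius_eq_zero (by simp [Cyl.radius, ← Pi.zero_def])⟩
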